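/- arXiv:2207.00920 — 3 statements merged into one kernel-verified Lean document; each statement's English description precedes it below -/
import Mathlib

section
/- Let F_n be the free group on x_1,…,x_n. Let f_{a,b,c} ∈ Aut(F_n) (for a < b, a ≠ c ≠ b) send x_c to x_c[x_a,x_b] and fix all other generators, and let h_{k,l} = g_{k,l}⋯g_{k,k-1} as above. Then for n ≥ a + r + 1, the r-tuple (f_{a,a+1,a+2}, h_{a+3,a}, h_{a+4,a}, …, h_{a+r+1,a}) consists of pairwise commuting elements of IA_n. -/
private lemma commute_of_forall_of {n : ℕ} (e f : MulAut (FreeGroup (Fin n)))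
    (h : ∀ i : Fin n, e (f (FreeGroup.of i)) = f (e (FreeGroup.of i))) :
    Commute e f := by
  have : (e * f) = (f * e) := by
    apply MulEquiv.toMonoidHom_injective
    apply FreeGroup.ext_hom
    intro i
    simpa using h i
  exact this



/-!
STATEMENT 3.  `F_n = FreeGroup (Fin n)` with 1-based generators `x_j = of ⟨j-1, _⟩`.
`f_{a,a+1,a+2}` sends `x_{a+2} ↦ x_{a+2} [x_a, x_{a+1}]` and fixes the other generators;
`h_{k,l} = g_{k,l} ⋯ g_{k,k-1}` fixes `x_j` for `j < l` or `j ≥ k` and conjugates `x_j`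
by `x_k` for `l ≤ j < k`.  For `n ≥ a + r + 1`, the `r`-tuple
`(f_{a,a+1,a+2}, h_{a+3,a}, h_{a+4,a}, …, h_{a+r+1,a})` consists of pairwise commuting
elements of `IA_n`.
-/

open scoped commutatorElement

theorem stmt_3 (n a r : ℕ) (ha : 1 ≤ a) (hr : 1 ≤ r) (hn : a + r + 1 ≤ n)
    (ψ : MulAut (FreeGroup (Fin n)))  -- `ψ` is `f_{a, a+1, a+2}`
    (hψ : ψ (FreeGroup.of (⟨a + 1, by omega⟩ : Fin n)) =
      FreeGroup.of (⟨a + 1, by omega⟩ : Fin n) *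
        ⁅FreeGroup.of (⟨a - 1, by omega⟩ : Fin n),
          FreeGroup.of (⟨a, by omega⟩ : Fin n)⁆)
    (hψfix : ∀ j : Fin n, (j : ℕ) ≠ a + 1 → ψ (FreeGroup.of j) = FreeGroup.of j)
    (φ : ℕ → MulAut (FreeGroup (Fin n)))
    -- for `3 ≤ m ≤ r + 1`, `φ m` is `h_{a+m, a}`:
    (hconj : ∀ m, ∀ _hm1 : 3 ≤ m, ∀ _hm2 : m ≤ r + 1, ∀ j : Fin n,
      a - 1 ≤ (j : ℕ) → (j : ℕ) < a - 1 + m →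
      φ m (FreeGroup.of j) =
        FreeGroup.of (⟨a - 1 + m, by omega⟩ : Fin n) * FreeGroup.of j *
          (FreeGroup.of (⟨a - 1 + m, by omega⟩ : Fin n))⁻¹)
    (hfix : ∀ m, ∀ _hm1 : 3 ≤ m, ∀ _hm2 : m ≤ r + 1, ∀ j : Fin n,
      ((j : ℕ) < a - 1 ∨ a - 1 + m ≤ (j : ℕ)) →
      φ m (FreeGroup.of j) = FreeGroup.of j) :
    (∀ m, 3 ≤ m → m ≤ r + 1 → Commute ψ (φ m)) ∧
    (∀ m m', 3 ≤ m → m ≤ r + 1 → 3 ≤ m' → m' ≤ r + 1 → Commute (φ m) (φ m')) := by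
  constructor
  · intro m hm1 hm2
    apply commute_of_forall_of
    intro j
    by_cases hout : (j : ℕ) < a - 1 ∨ a - 1 + m ≤ (j : ℕ)
    · have hne : (j : ℕ) ≠ a + 1 := by omega
      simp only [hfix m hm1 hm2 j hout, hψfix j hne]
    · push_neg at hout
      obtain ⟨h1, h2⟩ := hout
      by_cases hje : (j : ℕ) = a + 1
      · have hj : j = (⟨a + 1, by omega⟩ : Fin n) := Fin.ext hje
        rw [hj]
        simp only [commutatorElement_def, map_mul, map_inv, hψ,
          hψfix (⟨a - 1 + m, by omega⟩ : Fin n) (show a - 1 + m ≠ a + 1 by omega),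
          hconj m hm1 hm2 (⟨a + 1, by omega⟩ : Fin n)
            (show a - 1 ≤ a + 1 by omega) (show a + 1 < a - 1 + m by omega),
          hconj m hm1 hm2 (⟨a - 1, by omega⟩ : Fin n)
            (show a - 1 ≤ a - 1 by omega) (show a - 1 < a - 1 + m by omega),
          hconj m hm1 hm2 (⟨a, by omega⟩ : Fin n)
            (show a - 1 ≤ a by omega) (show a < a - 1 + m by omega)]
        group
      · simp only [hconj m hm1 hm2 j h1 h2, map_mul, map_inv,
          hψfix (⟨a - 1 + m, by omega⟩ : Fin n) (show a - 1 + m ≠ a + 1 by omega), hψfix j hje]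
  · have key : ∀ m m', 3 ≤ m → m ≤ r + 1 → 3 ≤ m' → m' ≤ r + 1 → m < m' →
        Commute (φ m) (φ m') := by
      intro m m' hm1 hm2 hm1' hm2' hlt
      apply commute_of_forall_of
      intro j
      by_cases hj1 : (j : ℕ) < a - 1
      · simp only [hfix m' hm1' hm2' j (Or.inl hj1), hfix m hm1 hm2 j (Or.inl hj1)]
      · by_cases hj2 : (j : ℕ) < a - 1 + m
        · simp only [hconj m' hm1' hm2' j (by omega) (by omega), map_mul, map_inv,
            hfix m hm1 hm2 (⟨a - 1 + m', by omega⟩ : Fin n)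
              (Or.inr (show a - 1 + m ≤ a - 1 + m' by omega)),
            hconj m hm1 hm2 j (by omega) hj2,
            hconj m' hm1' hm2' (⟨a - 1 + m, by omega⟩ : Fin n)
              (show a - 1 ≤ a - 1 + m by omega) (show a - 1 + m < a - 1 + m' by omega)]
          group
        · by_cases hj3 : (j : ℕ) < a - 1 + m'
          · simp only [hconj m' hm1' hm2' j (by omega) hj3, map_mul, map_inv,
              hfix m hm1 hm2 (⟨a - 1 + m', by omega⟩ : Fin n)
                (Or.inr (show a - 1 + m ≤ a - 1 + m' by omega)),
              hfix m hm1 hm2 j (Or.inr (by omega))]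
          · simp only [hfix m' hm1' hm2' j (Or.inr (by omega)),
              hfix m hm1 hm2 j (Or.inr (by omega))]
    intro m m' hm1 hm2 hm1' hm2'
    rcases lt_trichotomy m m' with h | h | h
    · exact key m m' hm1 hm2 hm1' hm2' h
    · subst h; exact Commute.refl _
    · exact (key m' m hm1' hm2' hm1 hm2 h).symm
end

section
/- Let H = ℚ^n and U = Hom(H, Λ²H) ≅ (Λ²H) ⊗ H*. With e_{a,b}^c := (e_a ∧ e_b) ⊗ e_c*, consider for n ≥ i+1 the element α = e_{2,1}^1 ∧ (e_{3,1}^1 + e_{3,2}^2) ∧ ⋯ ∧ (Σ_{j=1}^i e_{i+1,j}^j) ∈ Λ^i U. Then under the composition of the canonical inclusion ι_i : Λ^i U → (H^{⊗2} ⊗ H*)^{⊗i} and the wheel contraction c^wheel_i, the image of α equals i!· e_2 ∧ e_3 ∧ ⋯ ∧ e_{i+1} ∈ Λ^i H, which is nonzero. -/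
/-!
STATEMENT 5.  `H = ℚⁿ`, `U = Λ²H ⊗ H*` with basis `e_{a,b}^c = (e_a ∧ e_b) ⊗ e_c*`.
We work with coordinates: `H ⊗ H ⊗ H*` is modelled as `(Fin n × Fin n × Fin n) → ℚ`,
and `e_{a,b}^c` corresponds to `e_a ⊗ e_b ⊗ e_c* − e_b ⊗ e_a ⊗ e_c*` (the image under
`φ : U ↪ H^{⊗2} ⊗ H*`).  The inclusion `ι_i : Λ^i U → (H^{⊗2} ⊗ H*)^{⊗i}` sends
`u_1 ∧ ⋯ ∧ u_i` to `Σ_σ sgn(σ) φ(u_{σ(1)}) ⊗ ⋯ ⊗ φ(u_{σ(i)})`; on coordinates it is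
`iot` below.  The wheel contraction `c^wheel_i` sends `⊗_j (a_j ⊗ b_j ⊗ d_j*)` to
`(∏_j d_j*(b_{j-1})) · a_1 ∧ ⋯ ∧ a_i` (indices mod `i`), with values in `Λ^i H`
(realized inside the exterior algebra of `ℚⁿ`).

Claim: for `n ≥ i + 1` (and `i ≥ 1`), the element
`α = e_{2,1}^1 ∧ (e_{3,1}^1 + e_{3,2}^2) ∧ ⋯ ∧ (Σ_{j=1}^i e_{i+1,j}^j) ∈ Λ^i U`
satisfies `c^wheel_i (ι_i α) = i! · e_2 ∧ ⋯ ∧ e_{i+1} ≠ 0`.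
(All indices below are 0-based: the 1-based `e_j` is `Pi.single ⟨j-1,_⟩ 1`.)
-/

/-- Coordinates of `H ⊗ H ⊗ H*` for `H = ℚⁿ`. -/
abbrev MT (n : ℕ) : Type := (Fin n × Fin n × Fin n) → ℚ

/-- The element `φ(e_{a,b}^c) = e_a ⊗ e_b ⊗ e_c* − e_b ⊗ e_a ⊗ e_c*` in coordinates. -/
def eU {n : ℕ} (a b c : Fin n) : MT n := fun x =>
  (if x = (a, b, c) then 1 else 0) - (if x = (b, a, c) then 1 else 0)

/-- Coordinates of `ι_i (u_1 ∧ ⋯ ∧ u_i) = Σ_σ sgn(σ) u_{σ(1)} ⊗ ⋯ ⊗ u_{σ(i)}`. -/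
def iot (n i : ℕ) (u : Fin i → MT n) : (Fin i → Fin n × Fin n × Fin n) → ℚ :=
  fun K => ∑ σ : Equiv.Perm (Fin i),
    ((Equiv.Perm.sign σ : ℤ) : ℚ) * ∏ j : Fin i, u (σ j) (K j)

/-- `e_a ∈ ℚⁿ`. -/
def bv {n : ℕ} (a : Fin n) : Fin n → ℚ := Pi.single a 1

/-- The wedge `e_{v 0} ∧ e_{v 1} ∧ ⋯` in the exterior algebra of `ℚⁿ`. -/
noncomputable def wedge (n i : ℕ) (v : Fin i → Fin n) : ExteriorAlgebra ℚ (Fin n → ℚ) :=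
  ((List.finRange i).map fun j => ExteriorAlgebra.ι ℚ (bv (v j))).prod

/-- The wheel contraction `c^wheel_i : (H^{⊗2} ⊗ H*)^{⊗i} → Λ^i H`,
`⊗_j (a_j ⊗ b_j ⊗ d_j*) ↦ (∏_j d_j*(b_{j-1})) · a_1 ∧ ⋯ ∧ a_i` (with `b_0 = b_i`),
in coordinates. -/
noncomputable def cwheel (n i : ℕ) (T : (Fin i → Fin n × Fin n × Fin n) → ℚ) :
    ExteriorAlgebra ℚ (Fin n → ℚ) :=
  ∑ K : Fin i → Fin n × Fin n × Fin n,
    (T K * ∏ j : Fin i, (if (K j).2.2 = (K (⟨((j : ℕ) + i - 1) % i, Nat.mod_lt _ (lt_of_le_of_lt (Nat.zero_le _) j.isLt)⟩ : Fin i)).2.1 then (1:ℚ) else 0)) •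
      wedge n i fun j => (K j).1

-- aux lemmas
lemma prev_desc {i : ℕ} (hi : 1 ≤ i) (j : ℕ) (hj : j < i) :
    (j + i - 1) % i = if j = 0 then i - 1 else j - 1 := by
  rcases Nat.eq_zero_or_pos j with h | h
  · subst h; rw [if_pos rfl]; simpa using Nat.mod_eq_of_lt (by omega)
  · rw [if_neg (by omega)]
    have h2 : j + i - 1 = (j - 1) + i := by omega
    rw [h2, Nat.add_mod_right, Nat.mod_eq_of_lt (by omega)]

lemma alpha_support {n i : ℕ} (hn : i + 1 ≤ n) (α : Fin i → MT n)
    (hα : ∀ k : Fin i, α k = ∑ j : Fin ((k : ℕ) + 1),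
      eU (⟨(k : ℕ) + 1, Nat.lt_of_lt_of_le (Nat.succ_lt_succ k.isLt) hn⟩ : Fin n)
         (⟨(j : ℕ), Nat.lt_trans (Nat.lt_of_lt_of_le j.isLt (Nat.succ_le_of_lt k.isLt)) (Nat.lt_of_succ_le hn)⟩ : Fin n)
         (⟨(j : ℕ), Nat.lt_trans (Nat.lt_of_lt_of_le j.isLt (Nat.succ_le_of_lt k.isLt)) (Nat.lt_of_succ_le hn)⟩ : Fin n))
    (k : Fin i) (x y z : Fin n) (h : α k (x, y, z) ≠ 0) :
    ((x : ℕ) = (k : ℕ) + 1 ∧ y = z ∧ (z : ℕ) ≤ (k : ℕ)) ∨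
    ((y : ℕ) = (k : ℕ) + 1 ∧ x = z ∧ (z : ℕ) ≤ (k : ℕ)) := by
  by_contra hc
  rw [not_or] at hc
  apply h
  rw [hα k, Finset.sum_apply]
  apply Finset.sum_eq_zero
  intro j _
  have hjk : (j : ℕ) ≤ (k : ℕ) := by have := j.isLt; omega
  simp only [eU]
  split_ifs with h1 h2 h2
  · exfalso
    simp only [Prod.mk.injEq] at h1
    obtain ⟨e1, e2, e3⟩ := h1
    exact hc.1 ⟨by rw [e1], e2.trans e3.symm, by rw [e3]; exact hjk⟩
  · exfalso
    simp only [Prod.mk.injEq] at h1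
    obtain ⟨e1, e2, e3⟩ := h1
    exact hc.1 ⟨by rw [e1], e2.trans e3.symm, by rw [e3]; exact hjk⟩
  · exfalso
    simp only [Prod.mk.injEq] at h2
    obtain ⟨e1, e2, e3⟩ := h2
    exact hc.2 ⟨by rw [e2], e1.trans e3.symm, by rw [e3]; exact hjk⟩
  · ring

lemma alpha_one {n i : ℕ} (hn : i + 1 ≤ n) (α : Fin i → MT n)
    (hα : ∀ k : Fin i, α k = ∑ j : Fin ((k : ℕ) + 1),
      eU (⟨(k : ℕ) + 1, Nat.lt_of_lt_of_le (Nat.succ_lt_succ k.isLt) hn⟩ : Fin n)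
         (⟨(j : ℕ), Nat.lt_trans (Nat.lt_of_lt_of_le j.isLt (Nat.succ_le_of_lt k.isLt)) (Nat.lt_of_succ_le hn)⟩ : Fin n)
         (⟨(j : ℕ), Nat.lt_trans (Nat.lt_of_lt_of_le j.isLt (Nat.succ_le_of_lt k.isLt)) (Nat.lt_of_succ_le hn)⟩ : Fin n))
    (k : Fin i)
    (hk : (k : ℕ) + 1 < n) (h0 : 0 < n) :
    α k ((⟨(k : ℕ) + 1, hk⟩ : Fin n), (⟨0, h0⟩ : Fin n), (⟨0, h0⟩ : Fin n)) = 1 := by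
  rw [hα k, Finset.sum_apply]
  rw [Finset.sum_eq_single (⟨0, Nat.succ_pos _⟩ : Fin ((k : ℕ) + 1))]
  · simp [eU, Prod.ext_iff, Fin.ext_iff]
  · intro j _ hj
    have hjne : (j : ℕ) ≠ 0 := fun h' => hj (Fin.ext h')
    simp only [eU, Prod.ext_iff, Fin.ext_iff]
    split_ifs with h1 h2 h2
    · exact absurd h1.2.1 (by omega)
    · exact absurd h1.2.1 (by omega)
    · exact h2.2.1.elim
    · ring
  · intro h'; exact absurd (Finset.mem_univ _) h'

lemma vanish {n i : ℕ} (hi : 1 ≤ i) (σ : Equiv.Perm (Fin i))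
    (K : Fin i → Fin n × Fin n × Fin n) (prev : Fin i → Fin i)
    (hprev : ∀ j : Fin i, ((prev j : Fin i) : ℕ) = ((j : ℕ) + i - 1) % i)
    (hW : ∀ j : Fin i, (K j).2.2 = (K (prev j)).2.1)
    (hD : ∀ j : Fin i,
      (((K j).1 : ℕ) = ((σ j : Fin i) : ℕ) + 1 ∧ (K j).2.1 = (K j).2.2 ∧ (((K j).2.2 : Fin n) : ℕ) ≤ ((σ j : Fin i) : ℕ)) ∨
      (((K j).2.1 : ℕ) = ((σ j : Fin i) : ℕ) + 1 ∧ (K j).1 = (K j).2.2 ∧ (((K j).2.2 : Fin n) : ℕ) ≤ ((σ j : Fin i) : ℕ))) :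
    ∀ j : Fin i, ((K j).1 : ℕ) = ((σ j : Fin i) : ℕ) + 1 ∧ (((K j).2.1 : Fin n) : ℕ) = 0 ∧
      (((K j).2.2 : Fin n) : ℕ) = 0 := by
  have hprev' : ∀ j : Fin i, ((prev j : Fin i) : ℕ) = if (j : ℕ) = 0 then i - 1 else (j : ℕ) - 1 := by
    intro j; rw [hprev j, prev_desc hi _ j.isLt]
  -- b values
  set b : Fin i → ℕ := fun j => (((K j).2.1 : Fin n) : ℕ) with hb
  have hle : ∀ j : Fin i, b (prev j) ≤ b j := by
    intro j
    rcases hD j with ⟨_, h2, _⟩ | ⟨h1, _, h3⟩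
    · have : b (prev j) = b j := by
        show (((K (prev j)).2.1 : Fin n) : ℕ) = (((K j).2.1 : Fin n) : ℕ)
        rw [← hW j, h2]
      omega
    · have hpl : b (prev j) ≤ ((σ j : Fin i) : ℕ) := by
        show (((K (prev j)).2.1 : Fin n) : ℕ) ≤ _
        rw [← hW j]; exact h3
      have h5 : b j = ((σ j : Fin i) : ℕ) + 1 := h1
      omega
  have hinj : Function.Injective prev := by
    intro a c h
    have ha := hprev' a
    have hc := hprev' c
    rw [h, hc] at ha
    have ha' := a.isLt
    have hc' := c.isLt
    apply Fin.ext
    split_ifs at ha with h1 h2 h2 <;> omega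
  have hbij : Function.Bijective prev := Finite.injective_iff_bijective.mp hinj
  have hsum : ∑ j : Fin i, b (prev j) = ∑ j : Fin i, b j := hbij.sum_comp b
  have heq : ∀ j : Fin i, b (prev j) = b j := by
    intro j
    have := (Finset.sum_eq_sum_iff_of_le (fun j _ => hle j)).mp hsum j (Finset.mem_univ j)
    exact this
  -- rule out type 2
  have hT1 : ∀ j : Fin i, ((K j).1 : ℕ) = ((σ j : Fin i) : ℕ) + 1 ∧ (K j).2.1 = (K j).2.2 ∧
      (((K j).2.2 : Fin n) : ℕ) ≤ ((σ j : Fin i) : ℕ) := by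
    intro j
    rcases hD j with h | ⟨h1, _, h3⟩
    · exact h
    · exfalso
      have h4 : b (prev j) ≤ ((σ j : Fin i) : ℕ) := by
        show (((K (prev j)).2.1 : Fin n) : ℕ) ≤ _
        rw [← hW j]; exact h3
      have h5 : b j = ((σ j : Fin i) : ℕ) + 1 := h1
      have := heq j
      omega
  -- b constant
  have hconst : ∀ m : ℕ, (hm : m < i) → b ⟨m, hm⟩ = b ⟨0, hi⟩ := by
    intro m
    induction m with
    | zero => intro hm; rfl
    | succ m ih =>
      intro hm
      have hmlt : m < i := by omega
      have hp : prev ⟨m + 1, hm⟩ = ⟨m, hmlt⟩ := by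
        apply Fin.ext
        rw [hprev' ⟨m + 1, hm⟩]
        simp
      have := heq ⟨m + 1, hm⟩
      rw [hp] at this
      rw [← this, ih hmlt]
  have hball : ∀ j : Fin i, b j = b ⟨0, hi⟩ := fun j => by
    have := hconst (j : ℕ) j.isLt
    simpa using this
  -- b ⟨0⟩ = 0
  have hzero : b ⟨0, hi⟩ = 0 := by
    set j0 : Fin i := σ.symm ⟨0, hi⟩ with hj0
    have hσ : σ j0 = ⟨0, hi⟩ := σ.apply_symm_apply _
    have h := (hT1 j0).2.2
    rw [hσ] at h
    have hb0 : b j0 = (((K j0).2.2 : Fin n) : ℕ) := congrArg Fin.val (hT1 j0).2.1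
    have := hball j0
    simp at h
    omega
  intro j
  have h1 := (hT1 j).1
  have h2 : b j = 0 := by rw [hball j, hzero]
  have h3 : (((K j).2.2 : Fin n) : ℕ) = 0 := by
    have e := congrArg Fin.val (hT1 j).2.1
    rw [← e]; exact h2
  exact ⟨h1, h2, h3⟩

lemma wedge_eq_iotaMulti (n i : ℕ) (w : Fin i → Fin n) :
    wedge n i w = ExteriorAlgebra.ιMulti ℚ i (fun j => bv (w j)) := by
  rw [ExteriorAlgebra.ιMulti_apply, List.ofFn_eq_map]
  rfl

lemma wedge_perm (n i : ℕ) (w : Fin i → Fin n) (σ : Equiv.Perm (Fin i)) :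
    wedge n i (fun j => w (σ j)) = Equiv.Perm.sign σ • wedge n i w := by
  rw [wedge_eq_iotaMulti, wedge_eq_iotaMulti]
  exact AlternatingMap.map_perm _ (fun j => bv (w j)) σ

lemma wedge_ne_zero (n i : ℕ) (v : Fin i → Fin n) (hv : Function.Injective v) :
    wedge n i v ≠ 0 := by
  classical
  set Φ : (Fin n → ℚ) [⋀^Fin i]→ₗ[ℚ] ℚ :=
    (Matrix.detRowAlternating : ((Fin i → ℚ) [⋀^Fin i]→ₗ[ℚ] ℚ)).compLinearMap
      (LinearMap.funLeft ℚ ℚ v) with hΦ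
  set fam : ∀ k : ℕ, (Fin n → ℚ) [⋀^Fin k]→ₗ[ℚ] ℚ := Function.update (fun _ => 0) i Φ with hfam
  have hM : (Matrix.of fun j k : Fin i => bv (v j) (v k)) = (1 : Matrix (Fin i) (Fin i) ℚ) := by
    ext j k
    simp [Matrix.one_apply, bv, Pi.single_apply, hv.eq_iff, eq_comm]
  have hF : ExteriorAlgebra.liftAlternating (R := ℚ) fam (wedge n i v) = 1 := by
    rw [wedge_eq_iotaMulti, ExteriorAlgebra.liftAlternating_apply_ιMulti, hfam,
      Function.update_self, hΦ, AlternatingMap.compLinearMap_apply]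
    calc Matrix.detRowAlternating (fun j => LinearMap.funLeft ℚ ℚ v (bv (v j)))
        = Matrix.det (Matrix.of fun j k : Fin i => bv (v j) (v k)) := rfl
      _ = 1 := by rw [hM, Matrix.det_one]
  intro h
  rw [h, map_zero] at hF
  exact zero_ne_one hF

theorem stmt_5 (n i : ℕ) (hi : 1 ≤ i) (hn : i + 1 ≤ n)
    (α : Fin i → MT n)
    -- `α` is the tuple of factors of `e_{2,1}^1 ∧ (e_{3,1}^1 + e_{3,2}^2) ∧ ⋯`,
    -- in 0-based indices: the `k`-th factor is `Σ_{j=0}^{k} e_{k+1,j}^j`.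
    (hα : ∀ k : Fin i, α k = ∑ j : Fin ((k : ℕ) + 1),
      eU (⟨(k : ℕ) + 1, by have := k.isLt; omega⟩ : Fin n)
         (⟨(j : ℕ), by have := j.isLt; have := k.isLt; omega⟩ : Fin n)
         (⟨(j : ℕ), by have := j.isLt; have := k.isLt; omega⟩ : Fin n)) :
    cwheel n i (iot n i α) =
      (Nat.factorial i : ℚ) •
        wedge n i (fun j : Fin i => (⟨(j : ℕ) + 1, by have := j.isLt; omega⟩ : Fin n)) ∧
    cwheel n i (iot n i α) ≠ 0 := by
  classical
  have h0 : 0 < n := by omega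
  have key : cwheel n i (iot n i α) =
      (Nat.factorial i : ℚ) •
        wedge n i (fun j : Fin i => (⟨(j : ℕ) + 1, by have := j.isLt; omega⟩ : Fin n)) := by
    set vstd : Fin i → Fin n :=
      fun j : Fin i => (⟨(j : ℕ) + 1, by have := j.isLt; omega⟩ : Fin n) with hvstd
    have step : ∀ σ : Equiv.Perm (Fin i),
        (∑ K : Fin i → Fin n × Fin n × Fin n,
          ((((Equiv.Perm.sign σ : ℤ) : ℚ) * ∏ j : Fin i, α (σ j) (K j)) *
            ∏ j : Fin i, (if (K j).2.2 = (K (⟨((j : ℕ) + i - 1) % i,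
              Nat.mod_lt _ (lt_of_le_of_lt (Nat.zero_le _) j.isLt)⟩ : Fin i)).2.1
              then (1 : ℚ) else 0)) •
          wedge n i fun j => (K j).1)
        = wedge n i vstd := by
      intro σ
      set Kσ : Fin i → Fin n × Fin n × Fin n := fun j =>
        ((⟨((σ j : Fin i) : ℕ) + 1, by have := (σ j).isLt; omega⟩ : Fin n),
          (⟨0, h0⟩ : Fin n), (⟨0, h0⟩ : Fin n)) with hKσ
      refine (Fintype.sum_eq_single Kσ ?_).trans ?_
      · intro K hK
        by_cases hWall : ∀ j : Fin i, (K j).2.2 = (K (⟨((j : ℕ) + i - 1) % i,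
            Nat.mod_lt _ (lt_of_le_of_lt (Nat.zero_le _) j.isLt)⟩ : Fin i)).2.1
        · by_cases hA : ∀ j : Fin i, α (σ j) (K j) ≠ 0
          · exfalso
            apply hK
            have hD : ∀ j : Fin i,
                (((K j).1 : ℕ) = ((σ j : Fin i) : ℕ) + 1 ∧ (K j).2.1 = (K j).2.2 ∧
                  (((K j).2.2 : Fin n) : ℕ) ≤ ((σ j : Fin i) : ℕ)) ∨
                (((K j).2.1 : ℕ) = ((σ j : Fin i) : ℕ) + 1 ∧ (K j).1 = (K j).2.2 ∧
                  (((K j).2.2 : Fin n) : ℕ) ≤ ((σ j : Fin i) : ℕ)) := by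
              intro j
              exact alpha_support hn α hα (σ j) (K j).1 (K j).2.1 (K j).2.2 (hA j)
            have hvan := vanish hi σ K (fun j => (⟨((j : ℕ) + i - 1) % i,
              Nat.mod_lt _ (lt_of_le_of_lt (Nat.zero_le _) j.isLt)⟩ : Fin i))
              (fun j => rfl) hWall hD
            funext j
            obtain ⟨v1, v2, v3⟩ := hvan j
            exact Prod.ext (Fin.ext v1) (Prod.ext (Fin.ext v2) (Fin.ext v3))
          · push_neg at hA
            obtain ⟨j, hj⟩ := hA
            rw [Finset.prod_eq_zero (Finset.mem_univ j) hj]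
            simp
        · push_neg at hWall
          obtain ⟨j, hj⟩ := hWall
          have hz : (∏ j : Fin i, (if (K j).2.2 = (K (⟨((j : ℕ) + i - 1) % i,
              Nat.mod_lt _ (lt_of_le_of_lt (Nat.zero_le _) j.isLt)⟩ : Fin i)).2.1
              then (1 : ℚ) else 0)) = 0 :=
            Finset.prod_eq_zero (Finset.mem_univ j) (if_neg hj)
          rw [hz]
          simp
      · have hP : (∏ j : Fin i, α (σ j) (Kσ j)) = 1 := by
          apply Finset.prod_eq_one
          intro j _
          exact alpha_one hn α hα (σ j) (by have := (σ j).isLt; omega) h0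
        have hW : (∏ j : Fin i, (if (Kσ j).2.2 = (Kσ (⟨((j : ℕ) + i - 1) % i,
            Nat.mod_lt _ (lt_of_le_of_lt (Nat.zero_le _) j.isLt)⟩ : Fin i)).2.1
            then (1 : ℚ) else 0)) = 1 :=
          Finset.prod_eq_one fun j _ => if_pos rfl
        rw [hP, hW]
        have hwp : wedge n i (fun j => (Kσ j).1) = Equiv.Perm.sign σ • wedge n i vstd :=
          wedge_perm n i vstd σ
        rw [hwp]
        rcases Int.units_eq_one_or (Equiv.Perm.sign σ) with hs | hs <;>
          simp [hs, Units.smul_def]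
    simp only [cwheel, iot]
    simp_rw [Finset.sum_mul, Finset.sum_smul]
    rw [Finset.sum_comm]
    trans (∑ _σ : Equiv.Perm (Fin i), wedge n i vstd)
    · exact Finset.sum_congr rfl fun σ _ => step σ
    · rw [Finset.sum_const, Finset.card_univ, Fintype.card_perm, Fintype.card_fin]
      exact (Nat.cast_smul_eq_nsmul ℚ _ _).symm
  refine ⟨key, ?_⟩
  rw [key]
  apply smul_ne_zero
  · exact_mod_cast Nat.factorial_ne_zero i
  · apply wedge_ne_zero
    intro a b hab
    have := congrArg Fin.val hab
    simp only [Fin.val_mk] at this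
    exact Fin.ext (by omega)
end

section
/- Let x = e_{a_1,b_1}^{d_1} ∧ e_{a_2,b_2}^{b_2} ∧ ⋯ ∧ e_{a_i,b_i}^{b_i} ∈ Λ^i U be a basis element with d_1 ∉ {a_1,…,a_i, b_1}. Then c^wheel_i(ι_i(x)) = 0. -/
lemma eU_ne_zero {n : ℕ} {a b c : Fin n} {p : Fin n × Fin n × Fin n}
    (h : eU a b c p ≠ 0) : p = (a, b, c) ∨ p = (b, a, c) := by
  by_contra hc
  push_neg at hc
  simp [eU, hc.1, hc.2] at h

lemma pred_eq {i : ℕ} [NeZero i] (j : Fin i) :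
    (⟨((j : ℕ) + i - 1) % i, Nat.mod_lt _ (lt_of_le_of_lt (Nat.zero_le _) j.isLt)⟩ : Fin i)
      = j - 1 := by
  have hi : 1 ≤ i := Nat.one_le_iff_ne_zero.mpr (NeZero.ne i)
  apply Fin.ext
  rw [Fin.sub_def]
  simp only [Fin.val_one']
  rcases Nat.lt_or_ge 1 i with h | h
  · rw [Nat.mod_eq_of_lt h]
    congr 1
    omega
  · have : i = 1 := by omega
    subst this
    simp [Nat.mod_one]

theorem stmt_7 (n i : ℕ) (hi : 1 ≤ i)
    (a b : Fin i → Fin n) (d : Fin n)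
    (hd : (∀ j : Fin i, d ≠ a j) ∧ d ≠ b (⟨0, hi⟩ : Fin i))
    (x : Fin i → MT n)
    -- `x` is the tuple of factors of `e_{a_1,b_1}^{d_1} ∧ e_{a_2,b_2}^{b_2} ∧ ⋯`:
    (hx : x (⟨0, hi⟩ : Fin i) = eU (a ⟨0, hi⟩) (b ⟨0, hi⟩) d)
    (hx' : ∀ j : Fin i, (j : ℕ) ≠ 0 → x j = eU (a j) (b j) (b j)) :
    cwheel n i (iot n i x) = 0 := by
  classical
  haveI : NeZero i := ⟨by omega⟩
  set m0 : Fin i := ⟨0, hi⟩ with hm0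
  set c : Fin i → Fin n := fun m => if (m : ℕ) = 0 then d else b m with hcdef
  have hxc : ∀ m : Fin i, x m = eU (a m) (b m) (c m) := by
    intro m
    by_cases h : (m : ℕ) = 0
    · have hm : m = m0 := Fin.ext h
      rw [hm, hx]
      simp [hcdef, hm0]
    · rw [hx' m h]
      simp only [hcdef, if_neg h]
  have key : ∀ (K : Fin i → Fin n × Fin n × Fin n) (σ : Equiv.Perm (Fin i)),
      (∏ j : Fin i, x (σ j) (K j)) *
      (∏ j : Fin i,
        (if (K j).2.2 =
            (K (⟨((j : ℕ) + i - 1) % i,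
                Nat.mod_lt _ (lt_of_le_of_lt (Nat.zero_le _) j.isLt)⟩ : Fin i)).2.1
         then (1:ℚ) else 0)) = 0 := by
    intro K σ
    by_contra h
    obtain ⟨h1, h2⟩ := mul_ne_zero_iff.mp h
    have H1 : ∀ j : Fin i, K j = (a (σ j), b (σ j), c (σ j)) ∨
        K j = (b (σ j), a (σ j), c (σ j)) := by
      intro j
      refine eU_ne_zero ?_
      rw [← hxc (σ j)]
      exact Finset.prod_ne_zero_iff.mp h1 j (Finset.mem_univ j)
    simp only [pred_eq] at h2
    have H2 : ∀ j : Fin i, (K j).2.2 = (K (j - 1)).2.1 := by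
      intro j
      have := Finset.prod_ne_zero_iff.mp h2 j (Finset.mem_univ j)
      by_contra hcon
      rw [if_neg hcon] at this
      exact this rfl
    have Hthird : ∀ j : Fin i, (K j).2.2 = c (σ j) := by
      intro j
      rcases H1 j with h' | h' <;> rw [h']
    set j0 : Fin i := σ.symm m0 with hj0
    have hσj0 : σ j0 = m0 := σ.apply_symm_apply m0
    have step : ∀ j : Fin i, (K j).2.1 = d → (K (j - 1)).2.1 = d := by
      intro j hj
      rcases H1 j with h' | h'
      · have hb : b (σ j) = d := by rw [h'] at hj; exact hj
        have hne : ((σ j : Fin i) : ℕ) ≠ 0 := by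
          intro h0
          have hm : σ j = m0 := by
            apply Fin.ext
            simpa [hm0] using h0
          exact hd.2 (by rw [← hb, hm])
        rw [← H2 j, Hthird j]
        simp only [hcdef]
        rw [if_neg hne]
        exact hb
      · have ha : a (σ j) = d := by rw [h'] at hj; exact hj
        exact absurd ha.symm (hd.1 (σ j))
    have base : (K (j0 - 1)).2.1 = d := by
      rw [← H2 j0, Hthird j0, hσj0]
      simp [hcdef, hm0]
    letI := Fin.instCommRing i
    have chain : ∀ k : ℕ, (K (j0 - 1 - (k : Fin i))).2.1 = d := by
      intro k
      induction k with
      | zero => simpa using base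
      | succ k ih =>
          have h3 := step _ ih
          have hidx : ((k + 1 : ℕ) : Fin i) = (k : Fin i) + 1 := by push_cast; ring
          rw [hidx, sub_add_eq_sub_sub]
          exact h3
    have hzero : (1 : Fin i) + ((i - 1 : ℕ) : Fin i) = 0 := by
      have h4 : (((i - 1 : ℕ) + 1 : ℕ) : Fin i) = 0 := by
        rw [show i - 1 + 1 = i from by omega]
        exact Fin.natCast_self i
      push_cast at h4
      rw [add_comm]
      exact h4
    have hfin : (K j0).2.1 = d := by
      have h5 := chain (i - 1)
      rw [sub_sub, hzero, sub_zero] at h5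
      exact h5
    rcases H1 j0 with h' | h'
    · rw [h'] at hfin
      exact hd.2 (by rw [← hfin, hσj0])
    · rw [h'] at hfin
      exact hd.1 (σ j0) hfin.symm
  unfold cwheel
  refine Finset.sum_eq_zero fun K _ => ?_
  have hz : iot n i x K * ∏ j : Fin i,
      (if (K j).2.2 =
          (K (⟨((j : ℕ) + i - 1) % i,
              Nat.mod_lt _ (lt_of_le_of_lt (Nat.zero_le _) j.isLt)⟩ : Fin i)).2.1
       then (1:ℚ) else 0) = 0 := by
    unfold iot
    rw [Finset.sum_mul]
    refine Finset.sum_eq_zero fun σ _ => ?_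
    rw [mul_assoc, key K σ, mul_zero]
  rw [hz, zero_smul]
end
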